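/- arXiv:2311.17106 — 3 statements merged into one kernel-verified Lean document; each statement's English description precedes it below -/
import Mathlib

section
/- Let e > 0 be an integer. The map υ_e sending β ∈ B to the e-tuple (υ_e^{(0)}(β), …, υ_e^{(e−1)}(β)), where υ_e^{(i)}(β) = {q_e(x) : x ∈ β, r_e(x) = i}, is a bijection from B to B^e. -/
/-- The set `B` of subsets of `ℤ` that contain all sufficiently negative integers
and are bounded above. -/
def IsAbacus (β : Set ℤ) : Prop :=
  (∃ x : ℤ, ∀ z : ℤ, z < x → z ∈ β) ∧ (∃ y : ℤ, ∀ z ∈ β, z < y)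

/-- The `j`-th runner `υ_e^{(j)}(β) = {q_e(x) : x ∈ β, r_e(x) = j}` of the
`e`-runner decomposition of a 1-abacus. -/
def abacusRunner (e : ℕ) (j : Fin e) (β : Set ℤ) : Set ℤ :=
  {q : ℤ | ∃ x ∈ β, x % (e : ℤ) = (j : ℤ) ∧ x / (e : ℤ) = q}

section aux

variable {e : ℕ}

/-- The residue of `x` mod `e` as an element of `Fin e`. -/
def finOf (he : 0 < e) (x : ℤ) : Fin e :=
  ⟨(x % (e : ℤ)).toNat, by
    have h0 : (0:ℤ) < (e:ℤ) := by exact_mod_cast he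
    have h1 : 0 ≤ x % (e:ℤ) := Int.emod_nonneg x (by omega)
    have h2 : x % (e:ℤ) < (e:ℤ) := Int.emod_lt_of_pos x h0
    omega⟩

lemma finOf_coe (he : 0 < e) (x : ℤ) : ((finOf he x : Fin e) : ℤ) = x % (e : ℤ) := by
  have h0 : (0:ℤ) < (e:ℤ) := by exact_mod_cast he
  have h1 : 0 ≤ x % (e:ℤ) := Int.emod_nonneg x (by omega)
  simp [finOf, Int.toNat_of_nonneg h1]

lemma mem_iff_runner (he : 0 < e) (β : Set ℤ) (x : ℤ) (j : Fin e)
    (hj : (j : ℤ) = x % (e : ℤ)) :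
    x ∈ β ↔ x / (e : ℤ) ∈ abacusRunner e j β := by
  constructor
  · exact fun hx => ⟨x, hx, hj.symm, rfl⟩
  · rintro ⟨x', hx', h1, h2⟩
    have h3 := Int.mul_ediv_add_emod x' (e : ℤ)
    have h4 := Int.mul_ediv_add_emod x (e : ℤ)
    rw [h2, h1, hj] at h3
    have : x' = x := by omega
    exact this ▸ hx'

lemma eqj_mod (he : 0 < e) (j : Fin e) (q : ℤ) :
    ((j : ℤ) + (e : ℤ) * q) % (e : ℤ) = (j : ℤ) ∧
    ((j : ℤ) + (e : ℤ) * q) / (e : ℤ) = q := by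
  have h0 : (0:ℤ) < (e:ℤ) := by exact_mod_cast he
  have hj0 : (0:ℤ) ≤ (j : ℤ) := Int.ofNat_nonneg _
  have hje : (j : ℤ) < (e : ℤ) := by exact_mod_cast j.isLt
  constructor
  · rw [Int.add_mul_emod_self_left, Int.emod_eq_of_lt hj0 hje]
  · rw [Int.add_mul_ediv_left _ _ (by omega : (e:ℤ) ≠ 0),
      Int.ediv_eq_zero_of_lt hj0 hje, zero_add]

end aux

/-- for `e > 0`, the map `υ_e : β ↦ (υ_e^{(0)}(β), …, υ_e^{(e−1)}(β))`
is a bijection from `B` onto `B^e`. -/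
theorem stmt_6 (e : ℕ) (he : 0 < e) :
    Set.BijOn (fun β : Set ℤ => fun j : Fin e => abacusRunner e j β)
      {β : Set ℤ | IsAbacus β} {g : Fin e → Set ℤ | ∀ j : Fin e, IsAbacus (g j)} := by
  have h0 : (0:ℤ) < (e:ℤ) := by exact_mod_cast he
  refine ⟨?maps, ?inj, ?surj⟩
  case maps =>
    rintro β ⟨⟨x₀, hx₀⟩, ⟨y₀, hy₀⟩⟩ j
    constructor
    · -- lower bound x₀ / e
      refine ⟨x₀ / (e:ℤ), fun q hq => ?_⟩
      have hx : (j : ℤ) + (e:ℤ) * q ∈ β := by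
        apply hx₀
        have hje : (j : ℤ) < (e : ℤ) := by exact_mod_cast j.isLt
        have h3 := Int.mul_ediv_add_emod x₀ (e : ℤ)
        have h4 : 0 ≤ x₀ % (e:ℤ) := Int.emod_nonneg x₀ (by omega)
        have : (e:ℤ) * q + (e:ℤ) ≤ (e:ℤ) * (x₀ / (e:ℤ)) := by
          have : q + 1 ≤ x₀ / (e:ℤ) := hq
          nlinarith
        omega
      exact ⟨_, hx, (eqj_mod he j q).1, (eqj_mod he j q).2⟩
    · -- upper bound y₀ / e + 1
      refine ⟨y₀ / (e:ℤ) + 1, ?_⟩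
      rintro q ⟨x, hx, -, rfl⟩
      have hxy : x < y₀ := hy₀ x hx
      have : x / (e:ℤ) ≤ y₀ / (e:ℤ) := Int.ediv_le_ediv h0 (by omega)
      omega
  case inj =>
    intro β₁ h₁ β₂ h₂ hEq
    ext x
    have hc := finOf_coe he x
    rw [mem_iff_runner he β₁ x (finOf he x) hc,
        mem_iff_runner he β₂ x (finOf he x) hc]
    have : abacusRunner e (finOf he x) β₁ = abacusRunner e (finOf he x) β₂ :=
      congrFun hEq (finOf he x)
    rw [this]
  case surj =>
    rintro g hg
    set β : Set ℤ := {x | x / (e:ℤ) ∈ g (finOf he x)} with hβ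
    have hrun : ∀ j : Fin e, abacusRunner e j β = g j := by
      intro j
      ext q
      constructor
      · rintro ⟨x, hx, h1, rfl⟩
        have : finOf he x = j := by
          apply Fin.ext
          have := finOf_coe he x
          rw [h1] at this
          exact_mod_cast this
        rwa [hβ, Set.mem_setOf_eq, this] at hx
      · intro hq
        refine ⟨(j : ℤ) + (e:ℤ) * q, ?_, (eqj_mod he j q).1, (eqj_mod he j q).2⟩
        rw [hβ, Set.mem_setOf_eq, (eqj_mod he j q).2]
        have : finOf he ((j : ℤ) + (e:ℤ) * q) = j := by
          apply Fin.ext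
          have := finOf_coe he ((j : ℤ) + (e:ℤ) * q)
          rw [(eqj_mod he j q).1] at this
          exact_mod_cast this
        rwa [this]
    refine ⟨β, ?_, funext hrun⟩
    -- β is an abacus
    -- use Finset min/max over Fin e
    have hfin : (Finset.univ : Finset (Fin e)).Nonempty := ⟨⟨0, he⟩, Finset.mem_univ _⟩
    choose X hX using fun j => (hg j).1
    choose Y hY using fun j => (hg j).2
    set M : ℤ := Finset.univ.inf' hfin X with hM
    set N : ℤ := Finset.univ.sup' hfin Y with hN
    constructor
    · refine ⟨(e:ℤ) * M, fun z hz => ?_⟩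
      have hdiv : z / (e:ℤ) < M := by
        rw [Int.ediv_lt_iff_lt_mul h0]; linarith [mul_comm (e:ℤ) M]
      have hMle : M ≤ X (finOf he z) := Finset.inf'_le _ (Finset.mem_univ _)
      exact hX (finOf he z) _ (by omega)
    · refine ⟨(e:ℤ) * N, fun z hz => ?_⟩
      have hzg : z / (e:ℤ) ∈ g (finOf he z) := hz
      have h1 : z / (e:ℤ) < Y (finOf he z) := hY (finOf he z) _ hzg
      have h2 : Y (finOf he z) ≤ N := Finset.le_sup' _ (Finset.mem_univ _)
      have h3 := Int.mul_ediv_add_emod z (e : ℤ)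
      have h4 : z % (e:ℤ) < (e:ℤ) := Int.emod_lt_of_pos z h0
      have : (e:ℤ) * (z / (e:ℤ)) + (e:ℤ) ≤ (e:ℤ) * N := by nlinarith
      omega
end

section
/- Let π be a partition and s ∈ ℤ. The multiset of hook lengths of boxes of π equals the multiset {x − y : x ∈ β_{π,s}, y ∈ ℤ \ β_{π,s}, y < x}. -/
/-- Integer partitions, as weakly decreasing eventually-zero sequences `ℕ → ℕ`. -/
def PartitionSeq : Type :=
  {f : ℕ → ℕ // (∀ i j : ℕ, i ≤ j → f j ≤ f i) ∧ ∃ N : ℕ, ∀ i : ℕ, N ≤ i → f i = 0}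

/-- The beta-set `β_{π,s} = {π_i − i + s : i ≥ 1}`. -/
def betaSet (π : PartitionSeq) (s : ℤ) : Set ℤ :=
  Set.range fun i : ℕ => (π.1 i : ℤ) - ((i : ℤ) + 1) + s

/-- Hook length of the box in (0-indexed) row `i`, column `j`. -/
noncomputable def hookLength (f : ℕ → ℕ) (i j : ℕ) : ℕ :=
  (f i - j) + {k : ℕ | i < k ∧ j < f k}.ncard

namespace Stmt8Aux

lemma exists_le (π : PartitionSeq) (j : ℕ) : ∃ k, π.1 k ≤ j := by
  obtain ⟨N, hN⟩ := π.2.2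
  exact ⟨N, by simp [hN N le_rfl]⟩

/-- The conjugate partition. -/
noncomputable def pconj (π : PartitionSeq) (j : ℕ) : ℕ := Nat.find (exists_le π j)

lemma pconj_le_iff (π : PartitionSeq) (j k : ℕ) : pconj π j ≤ k ↔ π.1 k ≤ j := by
  constructor
  · intro hk
    exact le_trans (π.2.1 _ _ hk) (Nat.find_spec (exists_le π j))
  · intro hk
    exact Nat.find_min' _ hk

lemma lt_pconj_iff (π : PartitionSeq) (j k : ℕ) : k < pconj π j ↔ j < π.1 k := by
  rw [← not_le, ← not_le, pconj_le_iff]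

/-- Beta numbers. -/
def X (π : PartitionSeq) (s : ℤ) (i : ℕ) : ℤ := (π.1 i : ℤ) - ((i : ℤ) + 1) + s

/-- The complement of the beta set, enumerated increasingly. -/
noncomputable def Y (π : PartitionSeq) (s : ℤ) (j : ℕ) : ℤ :=
  (j : ℤ) - (pconj π j : ℤ) + s

lemma betaSet_eq (π : PartitionSeq) (s : ℤ) : betaSet π s = Set.range (X π s) := rfl

lemma X_strictAnti (π : PartitionSeq) (s : ℤ) {i i' : ℕ} (h : i < i') :
    X π s i' < X π s i := by
  have h1 := π.2.1 i i' h.le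
  simp only [X]
  omega

lemma X_inj (π : PartitionSeq) (s : ℤ) {i i' : ℕ} (h : X π s i = X π s i') : i = i' := by
  rcases lt_trichotomy i i' with hl | he | hl
  · exact absurd h (X_strictAnti π s hl).ne'
  · exact he
  · exact absurd h (X_strictAnti π s hl).ne

lemma pconj_anti (π : PartitionSeq) {j j' : ℕ} (h : j ≤ j') : pconj π j' ≤ pconj π j := by
  rw [pconj_le_iff]
  exact le_trans ((pconj_le_iff π j _).1 le_rfl) h

lemma Y_strictMono (π : PartitionSeq) (s : ℤ) {j j' : ℕ} (h : j < j') :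
    Y π s j < Y π s j' := by
  have h1 := pconj_anti π h.le
  simp only [Y]
  omega

lemma Y_inj (π : PartitionSeq) (s : ℤ) {j j' : ℕ} (h : Y π s j = Y π s j') : j = j' := by
  rcases lt_trichotomy j j' with hl | he | hl
  · exact absurd h (Y_strictMono π s hl).ne
  · exact he
  · exact absurd h (Y_strictMono π s hl).ne'

lemma Y_lt_X (π : PartitionSeq) (s : ℤ) {i j : ℕ} (h : j < π.1 i) :
    Y π s j < X π s i := by
  have h1 : i < pconj π j := (lt_pconj_iff π j i).2 h
  simp only [X, Y]
  omega

lemma X_lt_Y (π : PartitionSeq) (s : ℤ) {i j : ℕ} (h : π.1 i ≤ j) :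
    X π s i < Y π s j := by
  have h1 : pconj π j ≤ i := (pconj_le_iff π j i).2 h
  simp only [X, Y]
  omega

lemma Y_notMem (π : PartitionSeq) (s : ℤ) (j : ℕ) : Y π s j ∉ betaSet π s := by
  rintro ⟨i, hi⟩
  have hi' : X π s i = Y π s j := hi
  rcases lt_or_ge j (π.1 i) with hl | hl
  · exact absurd hi' (Y_lt_X π s hl).ne'
  · exact absurd hi' (X_lt_Y π s hl).ne

lemma covering (π : PartitionSeq) (s : ℤ) {t : ℤ} (ht : t ∉ betaSet π s) :
    ∃ j, Y π s j = t := by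
  have hex : ∃ m, X π s m ≤ t := by
    obtain ⟨N, hN⟩ := π.2.2
    refine ⟨N + (s - t).toNat, ?_⟩
    have h0 : π.1 (N + (s - t).toNat) = 0 := hN _ (Nat.le_add_right _ _)
    simp only [X, h0]
    omega
  classical
  set c := Nat.find hex with hc
  have hXc : X π s c ≤ t := Nat.find_spec hex
  have hne : X π s c ≠ t := fun he => ht ⟨c, he⟩
  have hXclt : X π s c < t := lt_of_le_of_ne hXc hne
  have hXc' : (π.1 c : ℤ) - (c + 1) + s < t := hXclt
  have hnn : 0 ≤ t - s + c := by
    have : (0 : ℤ) ≤ (π.1 c : ℤ) := Int.natCast_nonneg _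
    omega
  set j : ℕ := (t - s + c).toNat with hjdef
  have hj : (j : ℤ) = t - s + c := Int.toNat_of_nonneg hnn
  have hpc : pconj π j = c := by
    have hle : pconj π j ≤ c := by
      rw [pconj_le_iff]
      have : (π.1 c : ℤ) ≤ (j : ℤ) := by omega
      exact_mod_cast this
    rcases eq_or_lt_of_le hle with he | hlt
    · exact he
    · exfalso
      have hc0 : 0 < c := Nat.pos_of_ne_zero (by omega)
      have hfind : ¬ X π s (c - 1) ≤ t := Nat.find_min hex (by omega)
      have hXm : t < X π s (c - 1) := lt_of_not_ge hfind
      have hXm' : t < (π.1 (c - 1) : ℤ) - ((c - 1 : ℕ) + 1 : ℤ) + s := hXm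
      have hmono : π.1 (c - 1) ≤ π.1 (pconj π j) := π.2.1 _ _ (by omega)
      have hspec : π.1 (pconj π j) ≤ j := (pconj_le_iff π j _).1 le_rfl
      have h1 : (π.1 (c - 1) : ℤ) ≤ (j : ℤ) := by exact_mod_cast le_trans hmono hspec
      have h2 : ((c - 1 : ℕ) : ℤ) = (c : ℤ) - 1 := by omega
      omega
  refine ⟨j, ?_⟩
  simp only [Y, hpc]
  omega

lemma hook_eq (π : PartitionSeq) (s : ℤ) {i j : ℕ} (h : j < π.1 i) :
    (hookLength π.1 i j : ℤ) = X π s i - Y π s j := by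
  have hip : i < pconj π j := (lt_pconj_iff π j i).2 h
  have hset : {k : ℕ | i < k ∧ j < π.1 k} = ↑(Finset.Ioo i (pconj π j)) := by
    ext k
    simp [lt_pconj_iff]
  have hcard : {k : ℕ | i < k ∧ j < π.1 k}.ncard = pconj π j - i - 1 := by
    rw [hset, Set.ncard_coe_finset, Nat.card_Ioo]
  simp only [hookLength, hcard, X, Y]
  omega

end Stmt8Aux

open Stmt8Aux in
/-- the multiset of hook lengths of the boxes of `π` equals the
multiset `{x − y : x ∈ β_{π,s}, y ∉ β_{π,s}, y < x}`; equivalently, for every `h`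
the two multiplicities agree. -/
theorem stmt_8 (π : PartitionSeq) (s : ℤ) (h : ℤ) :
    {p : ℕ × ℕ | p.2 < π.1 p.1 ∧ (hookLength π.1 p.1 p.2 : ℤ) = h}.ncard
      = {q : ℤ × ℤ | q.1 ∈ betaSet π s ∧ q.2 ∉ betaSet π s ∧ q.2 < q.1 ∧
          q.1 - q.2 = h}.ncard := by
  classical
  set F : ℕ × ℕ → ℤ × ℤ := fun p => (X π s p.1, Y π s p.2) with hF
  have hinj : Function.Injective F := by
    rintro ⟨i, j⟩ ⟨i', j'⟩ hpq
    simp only [hF, Prod.mk.injEq] at hpq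
    exact Prod.ext (X_inj π s hpq.1) (Y_inj π s hpq.2)
  have himg : F '' {p : ℕ × ℕ | p.2 < π.1 p.1 ∧ (hookLength π.1 p.1 p.2 : ℤ) = h}
      = {q : ℤ × ℤ | q.1 ∈ betaSet π s ∧ q.2 ∉ betaSet π s ∧ q.2 < q.1 ∧
          q.1 - q.2 = h} := by
    ext ⟨a, b⟩
    constructor
    · rintro ⟨⟨i, j⟩, ⟨hbox, hhook⟩, hab⟩
      simp only [hF, Prod.mk.injEq] at hab
      obtain ⟨ha, hb⟩ := hab
      refine ⟨?_, ?_, ?_, ?_⟩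
      · exact ha ▸ ⟨i, rfl⟩
      · exact hb ▸ Y_notMem π s j
      · rw [← ha, ← hb]; exact Y_lt_X π s hbox
      · rw [← ha, ← hb, ← hook_eq π s hbox]; exact hhook
    · rintro ⟨ha, hb, hlt, hdiff⟩
      obtain ⟨i, hi⟩ := ha
      have hi' : X π s i = a := hi
      obtain ⟨j, hj⟩ := covering π s hb
      have hbox : j < π.1 i := by
        by_contra hge
        have := X_lt_Y π s (le_of_not_gt hge)
        rw [hi', hj] at this
        omega
      refine ⟨(i, j), ⟨hbox, ?_⟩, ?_⟩
      · rw [hook_eq π s hbox, hi', hj]; exact hdiff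
      · simp only [hF, Prod.mk.injEq]; exact ⟨hi', hj⟩
  rw [← himg]
  exact (Set.ncard_image_of_injOn hinj.injOn).symm
end

section
/- Let e, m > 0 be coprime integers and s ∈ ℤ. Define w_{e,m,s} : {0,…,e−1} → {0,…,e−1} as the inverse of b ↦ r_e(mb + s), define ξ_{e,m,s}(a, b) = (a − q_e(mb + s), b), and let w̃_{e,m,s} = ξ_{e,m,s} ∘ (id × w_{e,m,s}). Then w̃_{e,m,s} is a bijection of ℤ × {0,…,e−1}, and for every t ∈ ℤ the following diagram commutes: (q_m^e, r_m^e) ∘ w̃_{e,m,s} ∘ (x ↦ (q_e(x+s), r_e(x+s))) = w̃_{m,e,t} ∘ (x ↦ (q_m(x+t), r_m(x+t))) as maps ℤ → ℤ × {0,…,m−1}. -/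
/-- let `e, m > 0` be coprime and `s, t ∈ ℤ`. Let `w = w_{e,m,s}` be
the inverse of the permutation `b ↦ r_e(mb + s)` of `{0,…,e−1}`, and similarly
`w' = w_{m,e,t}`. With `ξ_{e,m,s}(a, b) = (a − q_e(mb + s), b)` and
`w̃_{e,m,s} = ξ_{e,m,s} ∘ (id × w_{e,m,s})`, the map `w̃_{e,m,s}` is a bijection of
`ℤ × {0,…,e−1}`, and for every `x ∈ ℤ`:
`(q_m^e, r_m^e)(w̃_{e,m,s}(q_e(x+s), r_e(x+s))) = w̃_{m,e,t}(q_m(x+t), r_m(x+t))`. -/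
theorem stmt_16 (e m : ℤ) (he : 0 < e) (hm : 0 < m) (hco : IsCoprime e m)
    (s t : ℤ) (w w' : ℤ → ℤ)
    (hw : Set.MapsTo w (Set.Ico 0 e) (Set.Ico 0 e))
    (hw' : Set.MapsTo w' (Set.Ico 0 m) (Set.Ico 0 m))
    (hwinv : ∀ b ∈ Set.Ico (0 : ℤ) e, w ((m * b + s) % e) = b)
    (hw'inv : ∀ d ∈ Set.Ico (0 : ℤ) m, w' ((e * d + t) % m) = d) :
    Set.BijOn (fun p : ℤ × ℤ => (p.1 - (m * w p.2 + s) / e, w p.2))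
        (Set.univ ×ˢ Set.Ico (0 : ℤ) e) (Set.univ ×ˢ Set.Ico (0 : ℤ) e) ∧
      ∀ x : ℤ,
        (fun p : ℤ × ℤ => (e * (p.1 / m) + p.2, p.1 % m))
            ((fun p : ℤ × ℤ => (p.1 - (m * w p.2 + s) / e, w p.2))
              ((x + s) / e, (x + s) % e))
          = (fun p : ℤ × ℤ => (p.1 - (e * w' p.2 + t) / m, w' p.2))
              ((x + t) / m, (x + t) % m) := by
  -- general key lemma: w is a two-sided inverse
  have key : ∀ (N M S : ℤ), 0 < N → ∀ (W : ℤ → ℤ),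
      Set.MapsTo W (Set.Ico 0 N) (Set.Ico 0 N) →
      (∀ b ∈ Set.Ico (0:ℤ) N, W ((M * b + S) % N) = b) →
      ∀ c ∈ Set.Ico (0:ℤ) N, (M * W c + S) % N = c := by
    intro N M S hN W hW hWinv c hc
    set f : ℤ → ℤ := fun b => (M * b + S) % N with hf
    have hmaps : Set.MapsTo f (Set.Ico 0 N) (Set.Ico 0 N) := by
      intro b _
      exact ⟨Int.emod_nonneg _ hN.ne', Int.emod_lt_of_pos _ hN⟩
    have hinj : Set.InjOn f (Set.Ico 0 N) := by
      intro b1 h1 b2 h2 hfe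
      have e1 := hWinv b1 h1
      have e2 := hWinv b2 h2
      simp only [hf] at hfe
      rw [← e1, ← e2, hfe]
    have hbij := (Set.Finite.injOn_iff_bijOn_of_mapsTo (Set.finite_Ico _ _) hmaps).mp hinj
    obtain ⟨b, hb, hfb⟩ := hbij.surjOn hc
    have : W c = b := by rw [← hfb]; exact hWinv b hb
    rw [this, ← hfb]
  have keyw := key e m s he w hw hwinv
  have keyw' := key m e t hm w' hw' hw'inv
  constructor
  · -- bijection
    have hinv : Set.InvOn (fun p : ℤ × ℤ => (p.1 + (m * p.2 + s) / e, (m * p.2 + s) % e))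
        (fun p : ℤ × ℤ => (p.1 - (m * w p.2 + s) / e, w p.2))
        (Set.univ ×ˢ Set.Ico (0 : ℤ) e) (Set.univ ×ˢ Set.Ico (0 : ℤ) e) := by
      constructor
      · rintro ⟨a, b⟩ ⟨-, hb⟩
        simp only [Prod.mk.injEq]
        rw [keyw b hb]
        exact ⟨by ring, rfl⟩
      · rintro ⟨a, b⟩ ⟨-, hb⟩
        simp only [Prod.mk.injEq]
        rw [hwinv b hb]
        exact ⟨by ring, rfl⟩
    refine hinv.bijOn ?_ ?_
    · rintro ⟨a, b⟩ ⟨-, hb⟩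
      exact ⟨trivial, hw hb⟩
    · rintro ⟨a, b⟩ ⟨-, hb⟩
      exact ⟨trivial, Int.emod_nonneg _ he.ne', Int.emod_lt_of_pos _ he⟩
  · intro x
    simp only [Prod.mk.injEq]
    set b := (x + s) % e with hbdef
    set d := (x + t) % m with hddef
    have hb : b ∈ Set.Ico (0:ℤ) e := ⟨Int.emod_nonneg _ he.ne', Int.emod_lt_of_pos _ he⟩
    have hd : d ∈ Set.Ico (0:ℤ) m := ⟨Int.emod_nonneg _ hm.ne', Int.emod_lt_of_pos _ hm⟩
    have hc := hw hb
    have hd' := hw' hd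
    set c := w b
    set d' := w' d
    -- x = e*u + m*c where u = (x+s)/e - (m*c+s)/e
    have h1 : (m * c + s) % e = b := keyw b hb
    have h2 : (e * d' + t) % m = d := keyw' d hd
    set u := (x + s) / e - (m * c + s) / e with hu
    set v := (x + t) / m - (e * d' + t) / m with hv
    have hxu : x = e * u + m * c := by
      have e1 := Int.mul_ediv_add_emod (x + s) e
      have e2 := Int.mul_ediv_add_emod (m * c + s) e
      rw [h1] at e2
      rw [← hbdef] at e1
      rw [hu]; linear_combination e2 - e1
    have hxv : x = m * v + e * d' := by
      have e1 := Int.mul_ediv_add_emod (x + t) m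
      have e2 := Int.mul_ediv_add_emod (e * d' + t) m
      rw [h2] at e2
      rw [← hddef] at e1
      rw [hv]; linear_combination e2 - e1
    -- decompose u
    have hu2 : u = m * (u / m) + u % m := (Int.mul_ediv_add_emod u m).symm
    have hum : u % m ∈ Set.Ico (0:ℤ) m := ⟨Int.emod_nonneg _ hm.ne', Int.emod_lt_of_pos _ hm⟩
    -- x = m*(e*(u/m)+c) + e*(u%m)
    have hx2 : m * (e * (u / m) + c) + e * (u % m) = m * v + e * d' := by
      linear_combination hxv - hxu - e * hu2
    -- uniqueness: m ∣ e * (d' - u % m)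
    have hdvd : m ∣ e * (d' - u % m) := ⟨(e * (u / m) + c) - v, by linear_combination -hx2⟩
    have hdvd2 : m ∣ (d' - u % m) := (IsCoprime.dvd_of_dvd_mul_left (hco.symm) hdvd)
    have heq2 : u % m = d' := by
      obtain ⟨k, hk⟩ := hdvd2
      simp only [Set.mem_Ico] at hum hd'
      have hk1 : m * k < m * 1 := by rw [mul_one]; linarith
      have hk2 : m * (-1) < m * k := by linarith
      have h3 : k < 1 := (mul_lt_mul_iff_right₀ hm).mp hk1
      have h4 : -1 < k := (mul_lt_mul_iff_right₀ hm).mp hk2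
      have hk0 : k = 0 := by omega
      rw [hk0, mul_zero] at hk
      omega
    refine ⟨?_, heq2⟩
    have hmm : m * (e * (u / m) + c) = m * v := by linear_combination hx2 - e * heq2
    exact mul_left_cancel₀ hm.ne' hmm
end
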